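/- Let H be a complex Hilbert space and let α, β₁, …, βₙ be vectors in H. If the operator inequality |α⟩⟨α| ≤ Σᵢ₌₁ⁿ |βᵢ⟩⟨βᵢ| holds (equivalently, for every vector γ in H one has |⟨γ, α⟩|² ≤ Σᵢ₌₁ⁿ |⟨γ, βᵢ⟩|²), then there exist complex numbers c₁, …, cₙ such that α = Σᵢ₌₁ⁿ cᵢ βᵢ and Σᵢ₌₁ⁿ |cᵢ|² ≤ 1. -/

import Mathlib

open scoped InnerProductSpace

/-!
The map `Φ γ = (⟪βᵢ, γ⟫)ᵢ` into `ℂⁿ` dominates `γ ↦ ⟪α, γ⟫` in norm, so the latter factors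
through the finite-dimensional range of `Φ` as a functional of norm at most `1`. Its Riesz
representative `c` satisfies `⟪∑ cᵢ βᵢ, γ⟫ = ⟪c, Φ γ⟫ = ⟪α, γ⟫` for all `γ`, and `‖c‖ ≤ 1`.
-/

theorem LinearMap.exists_inner_eq_of_norm_le {𝕜 V E : Type*} [RCLike 𝕜] [AddCommGroup V]
    [Module 𝕜 V] [NormedAddCommGroup E] [InnerProductSpace 𝕜 E] [FiniteDimensional 𝕜 E]
    (Φ : V →ₗ[𝕜] E) (f : V →ₗ[𝕜] 𝕜) {C : ℝ} (hC : 0 ≤ C) (hf : ∀ v, ‖f v‖ ≤ C * ‖Φ v‖) :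
    ∃ c : E, ‖c‖ ≤ C ∧ ∀ v, ⟪c, Φ v⟫_𝕜 = f v := by
  obtain ⟨s, hs⟩ := Φ.rangeRestrict.exists_rightInverse_of_surjective Φ.range_rangeRestrict
  have hΦs (k : range Φ) : Φ (s k) = k := congrArg Subtype.val (LinearMap.congr_fun hs k)
  -- `s (Φ v) - v` lies in `ker Φ ≤ ker f`
  have hfs (v : V) : f (s (Φ.rangeRestrict v)) = f v := by
    simpa [hΦs, sub_eq_zero] using hf (s (Φ.rangeRestrict v) - v)
  let φ : StrongDual 𝕜 (range Φ) := (f ∘ₗ s).mkContinuous C fun k => by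
    simpa only [LinearMap.comp_apply, hΦs, Submodule.coe_norm] using hf (s k)
  refine ⟨(InnerProductSpace.toDual 𝕜 (range Φ)).symm φ, ?_, fun v => ?_⟩
  · rw [Submodule.norm_coe, LinearIsometryEquiv.norm_map]
    exact LinearMap.mkContinuous_norm_le _ hC _
  · change ⟪_, (Φ.rangeRestrict v : E)⟫_𝕜 = _
    rw [← Submodule.coe_inner, InnerProductSpace.toDual_symm_apply]
    exact hfs v

section AnalysisMap

variable (𝕜 : Type*) {E ι : Type*} [RCLike 𝕜] [NormedAddCommGroup E] [InnerProductSpace 𝕜 E]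

noncomputable def analysisMap (β : ι → E) : E →ₗ[𝕜] EuclideanSpace 𝕜 ι where
  toFun γ := WithLp.toLp 2 fun i => ⟪β i, γ⟫_𝕜
  map_add' x y := by ext i; simp [inner_add_right]
  map_smul' a x := by ext i; simp [inner_smul_right]

@[simp]
theorem analysisMap_apply (β : ι → E) (γ : E) (i : ι) : analysisMap 𝕜 β γ i = ⟪β i, γ⟫_𝕜 := rfl

theorem norm_analysisMap_sq [Fintype ι] (β : ι → E) (γ : E) :
    ‖analysisMap 𝕜 β γ‖ ^ 2 = ∑ i, ‖⟪γ, β i⟫_𝕜‖ ^ 2 := by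
  simp only [EuclideanSpace.norm_sq_eq, analysisMap_apply, norm_inner_symm]

theorem inner_analysisMap [Fintype ι] (β : ι → E) (c : EuclideanSpace 𝕜 ι) (γ : E) :
    ⟪c, analysisMap 𝕜 β γ⟫_𝕜 = ⟪∑ i, c i • β i, γ⟫_𝕜 := by
  simp [PiLp.inner_apply, sum_inner, inner_smul_left, mul_comm]

end AnalysisMap

theorem rankOne_le_sum_rankOne_imp_combination
    {H : Type*} [NormedAddCommGroup H] [InnerProductSpace ℂ H]
    {n : ℕ} (α : H) (β : Fin n → H)
    (h : ∀ γ : H, ‖⟪γ, α⟫_ℂ‖ ^ 2 ≤ ∑ i, ‖⟪γ, β i⟫_ℂ‖ ^ 2) :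
    ∃ c : Fin n → ℂ, α = ∑ i, c i • β i ∧ ∑ i, ‖c i‖ ^ 2 ≤ 1 := by
  have hbound (γ : H) : ‖innerₛₗ ℂ α γ‖ ≤ 1 * ‖analysisMap ℂ β γ‖ := by
    rw [one_mul, innerₛₗ_apply_apply, norm_inner_symm]
    refine le_of_pow_le_pow_left₀ two_ne_zero (norm_nonneg _) ?_
    rw [norm_analysisMap_sq]
    exact h γ
  obtain ⟨c, hc, hcα⟩ := (analysisMap ℂ β).exists_inner_eq_of_norm_le _ zero_le_one hbound
  refine ⟨c, ext_inner_right ℂ fun γ => ?_, ?_⟩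
  · rw [← inner_analysisMap, hcα, innerₛₗ_apply_apply]
  · rw [← EuclideanSpace.norm_sq_eq]
    exact pow_le_one₀ (norm_nonneg c) hc
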